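/- arXiv:2011.14811 — 5 statements merged into one kernel-verified Lean document; each statement's English description precedes it below -/
import Mathlib

section
/- Let n ≥ 1, let A ∈ ℂ^{n×n} be positive-imaginary with sectorial decomposition A = Tᴴ diag(e^{iφ₁},…,e^{iφₙ}) T where T is invertible and π > φ₁ ≥ ⋯ ≥ φₙ ≥ 0, let 0 ≤ r ≤ n, and set Ê = Tᴴ diag(e^{iφ₁/2},…,e^{iφ_r/2},1,…,1) T. Then Ê is sectorial with prank(Ê) ≤ r, Ê⁻¹AÊ⁻¹ = T⁻¹ diag(1,…,1,e^{iφ_{r+1}},…,e^{iφₙ}) T⁻ᴴ, and Ê⁻¹AÊ⁻¹ is positive-imaginary with canonical phases equal (as a multiset) to {0 repeated r times} ∪ {φ_{r+1},…,φₙ}. -/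
/-!
Everything rests on the uniqueness of canonical phases. If `A = Tᴴ diag(e^{iφ}) T`, then
`(Aᴴ)⁻¹ A = T⁻¹ diag(e^{2iφ}) T`, so the multiset of the `e^{2iφₖ}` depends on `A` only. If
also `A = Sᴴ diag(e^{iψ}) S`, then `e^{iψⱼ}` is the value of the quadratic form of `A` at
`S⁻¹ eⱼ`, a positive combination of the `e^{iφₖ}`, hence `cos (ψⱼ - m) > 0` for the midpoint `m`
of the `φₖ`. As the `ψⱼ` spread less than `π`, one shift by a multiple of `2π` moves all of them
within `π/2` of `m`, where `θ ↦ e^{2iθ}` is injective; so the shifted `ψ` is a rearrangement of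
`φ`, both are sorted, and the normalisation of the midpoint forces the shift to be `0`.

Given uniqueness, `Ê = Tᴴ diag(e^{iχ}) T` and `Ê⁻¹ A Ê⁻¹ = T⁻¹ diag(e^{i(φ - 2χ)}) T⁻ᴴ` are
congruences of diagonal unitaries with phases in `[0, π)`, and permuting the rows of the
congruence matrix sorts those phases into the canonical ones.
-/

noncomputable section

open Matrix
open scoped Classical ComplexOrder

namespace LowPrank

variable {n : ℕ}

/-- A matrix is sectorial if its numerical range does not contain `0`
(`star x ⬝ᵥ x = 1` encodes `‖x‖₂ = 1`). -/
def IsSectorial (A : Matrix (Fin n) (Fin n) ℂ) : Prop :=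
  ∀ x : Fin n → ℂ, star x ⬝ᵥ x = 1 → star x ⬝ᵥ A.mulVec x ≠ 0

/-- The diagonal unitary matrix `diag (e^{iφ₁}, …, e^{iφₙ})`. -/
def phaseDiag (φ : Fin n → ℝ) : Matrix (Fin n) (Fin n) ℂ :=
  Matrix.diagonal fun k => Complex.exp (Complex.I * (φ k : ℂ))

/-- `A = Tᴴ diag (e^{iφ₁}, …, e^{iφₙ}) T` with `T` invertible. -/
def IsSectorialDecomp (A T : Matrix (Fin n) (Fin n) ℂ) (φ : Fin n → ℝ) : Prop :=
  IsUnit T ∧ A = Tᴴ * phaseDiag φ * T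

/-- `φ` is the (sorted, normalized) vector of canonical phases of `A`:
nonincreasing, spread `< π`, midpoint of the range in `(-π, π]`, and realizing a
sectorial decomposition of `A`. -/
def IsCanonicalPhases (A : Matrix (Fin n) (Fin n) ℂ) (φ : Fin n → ℝ) : Prop :=
  Antitone φ ∧ (∀ i j, φ i - φ j < Real.pi) ∧
    (-Real.pi < ((⨆ i, φ i) + ⨅ i, φ i) / 2) ∧ (((⨆ i, φ i) + ⨅ i, φ i) / 2 ≤ Real.pi) ∧
    ∃ T, IsSectorialDecomp A T φ

/-- The canonical phases `φ₁(A) ≥ ⋯ ≥ φₙ(A)` of a sectorial matrix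
(`phases A k` is the `(k+1)`-st largest canonical phase). -/
noncomputable def phases (A : Matrix (Fin n) (Fin n) ℂ) : Fin n → ℝ :=
  if h : ∃ φ, IsCanonicalPhases A φ then h.choose else 0

/-- The phase-rank: the number of nonzero canonical phases. -/
noncomputable def prank (A : Matrix (Fin n) (Fin n) ℂ) : ℕ :=
  {k : Fin n | phases A k ≠ 0}.ncard

/-- Positive-imaginary: sectorial with all canonical phases in `[0, π)`. -/
def PositiveImaginary (A : Matrix (Fin n) (Fin n) ℂ) : Prop :=
  IsSectorial A ∧ ∀ k, phases A k ∈ Set.Ico 0 Real.pi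

/-- Symmetric gauge function. -/
structure IsSymmetricGauge (Φ : (Fin n → ℝ) → ℝ) : Prop where
  pos : ∀ x, x ≠ 0 → 0 < Φ x
  smul : ∀ (ρ : ℝ) (x), Φ (ρ • x) = |ρ| * Φ x
  subadd : ∀ x y, Φ (x + y) ≤ Φ x + Φ y
  perm : ∀ (σ : Equiv.Perm (Fin n)) (x), Φ (x ∘ σ) = Φ x
  abs : ∀ x, Φ (fun k => |x k|) = Φ x

/-- The set `S_p(A, r)` of `r`-half-truncations of `A`. -/
def Sp (A : Matrix (Fin n) (Fin n) ℂ) (r : ℕ) : Set (Matrix (Fin n) (Fin n) ℂ) :=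
  {E | ∃ T, IsSectorialDecomp A T (phases A) ∧
    E = Tᴴ * Matrix.diagonal (fun k : Fin n =>
      if (k : ℕ) < r then Complex.exp (Complex.I * ((phases A k / 2 : ℝ) : ℂ)) else 1) * T}


open scoped Real
open Complex

section MatrixAlgebra

variable {ι : Type*} [Fintype ι] [DecidableEq ι]

theorem dotProduct_conjTranspose_mul_diagonal_mul_mulVec (T : Matrix ι ι ℂ) (d : ι → ℂ)
    (x : ι → ℂ) :
    star x ⬝ᵥ (Tᴴ * diagonal d * T) *ᵥ x = ∑ k, d k * (normSq ((T *ᵥ x) k) : ℂ) := by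
  rw [mul_assoc, ← mulVec_mulVec, dotProduct_mulVec, ← star_mulVec, ← mulVec_mulVec]
  refine Finset.sum_congr rfl fun k _ => ?_
  rw [mulVec_diagonal, Pi.star_apply, normSq_eq_conj_mul_self, star_def]
  ring

theorem inv_diagonal_of_ne_zero {d : ι → ℂ} (hd : ∀ k, d k ≠ 0) :
    (diagonal d)⁻¹ = diagonal d⁻¹ :=
  inv_eq_left_inv <| by
    rw [diagonal_mul_diagonal, ← diagonal_one]
    exact congrArg diagonal (funext fun k => inv_mul_cancel₀ (hd k))

theorem inv_conjTranspose_mul_diagonal_mul (T : Matrix ι ι ℂ) {d : ι → ℂ} (hd : ∀ k, d k ≠ 0) :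
    (Tᴴ * diagonal d * T)⁻¹ = T⁻¹ * diagonal d⁻¹ * (T⁻¹)ᴴ := by
  rw [Matrix.mul_inv_rev, Matrix.mul_inv_rev, inv_diagonal_of_ne_zero hd,
    conjTranspose_nonsing_inv, mul_assoc]

theorem inv_conjTranspose_mul_diagonal_mul_mul {T : Matrix ι ι ℂ} (hT : IsUnit T) {d : ι → ℂ}
    (hd : ∀ k, d k ≠ 0) (e : ι → ℂ) :
    (Tᴴ * diagonal d * T)⁻¹ * (Tᴴ * diagonal e * T) = T⁻¹ * diagonal (d⁻¹ * e) * T := by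
  have hTT : (T⁻¹)ᴴ * Tᴴ = 1 := by
    rw [← conjTranspose_mul, mul_nonsing_inv T ((isUnit_iff_isUnit_det T).mp hT),
      conjTranspose_one]
  rw [inv_conjTranspose_mul_diagonal_mul T hd,
    show diagonal (d⁻¹ * e) = diagonal d⁻¹ * diagonal e from (diagonal_mul_diagonal _ _).symm]
  simp only [mul_assoc]
  rw [← mul_assoc (T⁻¹)ᴴ, hTT, one_mul]

theorem inv_mul_mul_inv_of_conjTranspose_mul_diagonal_mul {T : Matrix ι ι ℂ} (hT : IsUnit T)
    {d : ι → ℂ} (hd : ∀ k, d k ≠ 0) (e : ι → ℂ) :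
    (Tᴴ * diagonal d * T)⁻¹ * (Tᴴ * diagonal e * T) * (Tᴴ * diagonal d * T)⁻¹
      = T⁻¹ * diagonal (d⁻¹ * e * d⁻¹) * (T⁻¹)ᴴ := by
  rw [inv_conjTranspose_mul_diagonal_mul_mul hT hd, inv_conjTranspose_mul_diagonal_mul T hd,
    show diagonal (d⁻¹ * e * d⁻¹) = diagonal (d⁻¹ * e) * diagonal d⁻¹ from
      (diagonal_mul_diagonal _ _).symm]
  simp only [mul_assoc]
  rw [← mul_assoc T, mul_nonsing_inv T ((isUnit_iff_isUnit_det T).mp hT), one_mul]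

theorem isUnit_submatrix_equiv_id {T : Matrix ι ι ℂ} (hT : IsUnit T) (σ : Equiv.Perm ι) :
    IsUnit (T.submatrix σ id) := by
  rw [isUnit_iff_isUnit_det, det_permute]
  exact ((Equiv.Perm.sign σ).isUnit.map (Int.castRingHom ℂ)).mul
    ((isUnit_iff_isUnit_det T).mp hT)

theorem conjTranspose_mul_diagonal_mul_submatrix (T : Matrix ι ι ℂ) (d : ι → ℂ)
    (σ : Equiv.Perm ι) :
    (T.submatrix σ id)ᴴ * diagonal (d ∘ σ) * T.submatrix σ id = Tᴴ * diagonal d * T := by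
  rw [conjTranspose_submatrix, ← submatrix_diagonal_equiv, ← submatrix_mul _ _ _ _ _
    σ.bijective, ← submatrix_mul _ _ _ _ _ σ.bijective, submatrix_id_id]

end MatrixAlgebra

theorem abs_sub_midpoint_iSup_iInf_lt {ι : Type*} [Finite ι] {φ : ι → ℝ} {c : ℝ}
    (hφ : ∀ i j, φ i - φ j < c) (k : ι) :
    |φ k - ((⨆ i, φ i) + ⨅ i, φ i) / 2| < c / 2 := by
  have : Nonempty ι := ⟨k⟩
  obtain ⟨i, hi⟩ := exists_eq_ciSup_of_finite (f := φ)
  obtain ⟨j, hj⟩ := exists_eq_ciInf_of_finite (f := φ)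
  have hk₁ := le_ciSup (Finite.bddAbove_range φ) k
  have hk₂ := ciInf_le (Finite.bddBelow_range φ) k
  have hij := hφ i j
  rw [abs_lt]
  constructor <;> linarith

theorem exp_neg_mul_I_mul_exp_mul_I (m θ : ℝ) :
    exp (-(I * m)) * exp (I * θ) = exp ((θ - m : ℝ) * I) := by
  rw [← exp_add]
  push_cast
  ring_nf

section Sectorial

variable {T : Matrix (Fin n) (Fin n) ℂ} {φ : Fin n → ℝ} {m : ℝ}

theorem re_exp_neg_mul_dotProduct_mulVec_pos (hT : IsUnit T) (hφ : ∀ k, |φ k - m| < π / 2)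
    {x : Fin n → ℂ} (hx : x ≠ 0) :
    0 < (exp (-(I * m)) * (star x ⬝ᵥ (Tᴴ * phaseDiag φ * T) *ᵥ x)).re := by
  have hTx : T *ᵥ x ≠ 0 := fun h =>
    hx (mulVec_injective_iff_isUnit.mpr hT (h.trans (mulVec_zero T).symm))
  obtain ⟨k₀, hk₀⟩ := Function.ne_iff.mp hTx
  have hcos : ∀ k, 0 < Real.cos (φ k - m) := fun k =>
    Real.cos_pos_of_mem_Ioo (abs_lt.mp (hφ k))
  have hterm : ∀ k, (exp (-(I * m)) * (exp (I * φ k) * normSq ((T *ᵥ x) k))).re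
      = Real.cos (φ k - m) * normSq ((T *ᵥ x) k) := fun k => by
    rw [← mul_assoc, exp_neg_mul_I_mul_exp_mul_I, re_mul_ofReal, exp_ofReal_mul_I_re]
  rw [phaseDiag, dotProduct_conjTranspose_mul_diagonal_mul_mulVec, Finset.mul_sum, re_sum]
  simp only [hterm]
  exact Finset.sum_pos' (fun k _ => mul_nonneg (hcos k).le (normSq_nonneg _))
    ⟨k₀, Finset.mem_univ _, mul_pos (hcos k₀) (normSq_pos.mpr hk₀)⟩

theorem isSectorial_of_abs_sub_lt (hT : IsUnit T) (hφ : ∀ k, |φ k - m| < π / 2) :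
    IsSectorial (Tᴴ * phaseDiag φ * T) := by
  intro x hx h₀
  have hx₀ : x ≠ 0 := by
    rintro rfl
    simp at hx
  have hpos := re_exp_neg_mul_dotProduct_mulVec_pos hT hφ hx₀
  rw [h₀, mul_zero, zero_re] at hpos
  exact hpos.false

theorem cos_sub_pos_of_conjTranspose_mul_phaseDiag_mul_eq {S : Matrix (Fin n) (Fin n) ℂ}
    {ψ : Fin n → ℝ} (hT : IsUnit T) (hS : IsUnit S) (hφ : ∀ k, |φ k - m| < π / 2)
    (h : Tᴴ * phaseDiag φ * T = Sᴴ * phaseDiag ψ * S) (j : Fin n) :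
    0 < Real.cos (ψ j - m) := by
  set x := S⁻¹ *ᵥ Pi.single j 1
  have hSx : S *ᵥ x = Pi.single j 1 := by
    rw [mulVec_mulVec, mul_nonsing_inv S ((isUnit_iff_isUnit_det S).mp hS), one_mulVec]
  have hx : x ≠ 0 := by
    intro hx
    simpa [hx] using congrFun hSx j
  have hform : star x ⬝ᵥ (Sᴴ * phaseDiag ψ * S) *ᵥ x = exp (I * ψ j) := by
    rw [phaseDiag, dotProduct_conjTranspose_mul_diagonal_mul_mulVec, hSx]
    simp [Pi.single_apply, apply_ite]
  have hpos := re_exp_neg_mul_dotProduct_mulVec_pos hT hφ hx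
  rwa [h, hform, exp_neg_mul_I_mul_exp_mul_I, exp_ofReal_mul_I_re] at hpos

end Sectorial

theorem IsCanonicalPhases.isSectorial {A : Matrix (Fin n) (Fin n) ℂ} {φ : Fin n → ℝ}
    (h : IsCanonicalPhases A φ) : IsSectorial A := by
  obtain ⟨-, hspread, -, -, T, hT, rfl⟩ := h
  exact isSectorial_of_abs_sub_lt hT (abs_sub_midpoint_iSup_iInf_lt hspread)

theorem eq_of_multiset_map_eq_of_injOn {α β : Type*} [Nonempty α] {f : α → β} {S : Set α}
    (hf : S.InjOn f) {s t : Multiset α} (hs : ∀ a ∈ s, a ∈ S) (ht : ∀ a ∈ t, a ∈ S)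
    (h : s.map f = t.map f) : s = t := by
  have hinv : ∀ u : Multiset α, (∀ a ∈ u, a ∈ S) → (u.map f).map (Function.invFunOn f S) = u :=
    fun u hu => by
      rw [Multiset.map_map]
      conv_rhs => rw [← Multiset.map_id u]
      exact Multiset.map_congr rfl fun a ha => hf.leftInvOn_invFunOn (hu a ha)
  rw [← hinv s hs, h, hinv t ht]

theorem eq_of_antitone_of_multiset_map_eq {f g : Fin n → ℝ} (hf : Antitone f) (hg : Antitone g)
    (h : Finset.univ.val.map f = Finset.univ.val.map g) : f = g := by
  have hperm : (List.ofFn f).Perm (List.ofFn g) := by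
    rw [← Multiset.coe_eq_coe, List.ofFn_eq_map, List.ofFn_eq_map]
    exact h
  exact List.ofFn_injective
    (hperm.eq_of_sortedGE (List.sortedGE_ofFn_iff.mpr hf) (List.sortedGE_ofFn_iff.mpr hg))

theorem injOn_exp_mul_I_sq (m : ℝ) :
    {θ : ℝ | |θ - m| < π / 2}.InjOn fun θ : ℝ => exp (I * θ) ^ 2 := by
  intro a ha b hb hab
  simp only [sq, ← exp_add] at hab
  obtain ⟨k, hk⟩ := exp_eq_exp_iff_exists_int.mp hab
  have hk' : a - b = k * π := by
    have him : a + a = b + b + k * (2 * π) := by simpa using congrArg im hk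
    linarith
  have hab' : |a - b| < π := by
    obtain ⟨ha₁, ha₂⟩ := abs_lt.mp (show |a - m| < π / 2 from ha)
    obtain ⟨hb₁, hb₂⟩ := abs_lt.mp (show |b - m| < π / 2 from hb)
    rw [abs_lt]
    constructor <;> linarith
  have hk0 : k = 0 := by
    rw [hk', abs_mul, abs_of_pos Real.pi_pos] at hab'
    have : |(k : ℝ)| < 1 := by nlinarith [Real.pi_pos]
    exact Int.abs_lt_one_iff.mp (by exact_mod_cast this)
  subst hk0
  simpa [sub_eq_zero] using hk'

section Uniqueness

variable {T S : Matrix (Fin n) (Fin n) ℂ} {φ ψ : Fin n → ℝ}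

theorem inv_conjTranspose_mul_self_of_phaseDiag (hT : IsUnit T) :
    (Tᴴ * phaseDiag φ * T)ᴴ⁻¹ * (Tᴴ * phaseDiag φ * T)
      = T⁻¹ * diagonal (fun k => exp (I * φ k) ^ 2) * T := by
  have hadj : (Tᴴ * phaseDiag φ * T)ᴴ = Tᴴ * diagonal (fun k => (exp (I * φ k))⁻¹) * T := by
    rw [conjTranspose_mul, conjTranspose_mul, conjTranspose_conjTranspose, phaseDiag,
      diagonal_conjTranspose, ← mul_assoc Tᴴ]
    congr 3
    funext k
    rw [Pi.star_apply, star_def, ← exp_conj, map_mul, conj_I, conj_ofReal, neg_mul, exp_neg]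
  rw [hadj, phaseDiag, inv_conjTranspose_mul_diagonal_mul_mul hT
    (fun k => inv_ne_zero (exp_ne_zero _))]
  congr 3
  funext k
  simp [sq]

open Polynomial in
theorem roots_charpoly_inv_conjTranspose_mul_self (hT : IsUnit T) :
    ((Tᴴ * phaseDiag φ * T)ᴴ⁻¹ * (Tᴴ * phaseDiag φ * T)).charpoly.roots
      = Finset.univ.val.map fun k => exp (I * φ k) ^ 2 := by
  rw [inv_conjTranspose_mul_self_of_phaseDiag hT, mul_assoc, charpoly_mul_comm, mul_assoc,
    mul_nonsing_inv T ((isUnit_iff_isUnit_det T).mp hT), mul_one, charpoly_diagonal,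
    roots_prod _ _ (Finset.prod_ne_zero_iff.mpr fun k _ => X_sub_C_ne_zero _)]
  simp only [roots_X_sub_C, Multiset.bind_singleton]

theorem map_exp_mul_I_sq_eq_of_conjTranspose_mul_phaseDiag_mul_eq (hT : IsUnit T)
    (hS : IsUnit S) (h : Tᴴ * phaseDiag φ * T = Sᴴ * phaseDiag ψ * S) :
    (Finset.univ.val.map fun k => exp (I * φ k) ^ 2)
      = Finset.univ.val.map fun k => exp (I * ψ k) ^ 2 := by
  rw [← roots_charpoly_inv_conjTranspose_mul_self hT, h,
    roots_charpoly_inv_conjTranspose_mul_self hS]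

end Uniqueness

theorem abs_lt_pi_div_two_of_cos_pos {x : ℝ} (hx : |x| ≤ π + π / 2) (hcos : 0 < Real.cos x) :
    |x| < π / 2 := by
  by_contra! h
  have := Real.cos_nonpos_of_pi_div_two_le_of_le h hx
  rw [Real.cos_abs] at this
  linarith

theorem exists_int_forall_abs_sub_lt {ι : Type*} [Finite ι] {ψ : ι → ℝ} {m : ℝ}
    (hψ : ∀ i j, ψ i - ψ j < π) (hcos : ∀ j, 0 < Real.cos (ψ j - m)) :
    ∃ t : ℤ, ∀ j, |ψ j - 2 * π * t - m| < π / 2 := by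
  set μ := ((⨆ i, ψ i) + ⨅ i, ψ i) / 2
  set t := round ((μ - m) / (2 * π))
  have hμ : |μ - m - 2 * π * t| ≤ π := by
    rw [show μ - m - 2 * π * t = 2 * π * ((μ - m) / (2 * π) - t) by field_simp, abs_mul,
      abs_of_pos Real.two_pi_pos]
    linarith [mul_le_mul_of_nonneg_left (abs_sub_round ((μ - m) / (2 * π))) Real.two_pi_pos.le]
  refine ⟨t, fun j => abs_lt_pi_div_two_of_cos_pos ?_ ?_⟩
  · calc |ψ j - 2 * π * t - m| ≤ |ψ j - μ| + |μ - m - 2 * π * t| := by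
          rw [show ψ j - 2 * π * t - m = (ψ j - μ) + (μ - m - 2 * π * t) by ring]
          exact abs_add_le _ _
      _ ≤ π / 2 + π := add_le_add (abs_sub_midpoint_iSup_iInf_lt hψ j).le hμ
      _ = π + π / 2 := add_comm _ _
  · rw [show ψ j - 2 * π * t - m = ψ j - m - t * (2 * π) by ring, Real.cos_sub_int_mul_two_pi]
    exact hcos j

theorem midpoint_iSup_iInf_add_const {ι : Type*} [Finite ι] [Nonempty ι] (φ : ι → ℝ) (c : ℝ) :
    ((⨆ i, φ i + c) + ⨅ i, φ i + c) / 2 = ((⨆ i, φ i) + ⨅ i, φ i) / 2 + c := by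
  have hsup := (OrderIso.addRight c).map_ciSup (Finite.bddAbove_range φ)
  have hinf := (OrderIso.addRight c).map_ciInf (Finite.bddBelow_range φ)
  simp only [OrderIso.addRight_apply] at hsup hinf
  rw [← hsup, ← hinf]
  ring

theorem IsCanonicalPhases.unique {A : Matrix (Fin n) (Fin n) ℂ} {φ ψ : Fin n → ℝ}
    (hφ : IsCanonicalPhases A φ) (hψ : IsCanonicalPhases A ψ) : ψ = φ := by
  obtain ⟨hφa, hφs, hφm₁, hφm₂, T, hT, rfl⟩ := hφ
  obtain ⟨hψa, hψs, hψm₁, hψm₂, S, hS, hTS⟩ := hψ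
  rcases isEmpty_or_nonempty (Fin n) with _ | _
  · exact Subsingleton.elim _ _
  set m := ((⨆ i, φ i) + ⨅ i, φ i) / 2 with hm
  have hφm : ∀ k, |φ k - m| < π / 2 := abs_sub_midpoint_iSup_iInf_lt hφs
  obtain ⟨t, ht⟩ := exists_int_forall_abs_sub_lt hψs
    (cos_sub_pos_of_conjTranspose_mul_phaseDiag_mul_eq hT hS hφm hTS)
  have hshift : (fun j => ψ j - 2 * π * t) = φ := by
    refine eq_of_antitone_of_multiset_map_eq (fun i j hij => by linarith [hψa hij]) hφa ?_
    refine eq_of_multiset_map_eq_of_injOn (injOn_exp_mul_I_sq m)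
      (by simpa using ht) (by simpa using hφm) ?_
    simp only [Multiset.map_map, Function.comp_def]
    rw [map_exp_mul_I_sq_eq_of_conjTranspose_mul_phaseDiag_mul_eq hT hS hTS]
    refine Multiset.map_congr rfl fun j _ => ?_
    rw [show I * ((ψ j - 2 * π * t : ℝ) : ℂ) = I * ψ j - t * (2 * π * I) by push_cast; ring,
      exp_sub, exp_int_mul_two_pi_mul_I, div_one]
  have hψφ : ∀ j, ψ j = φ j + 2 * π * t := fun j => by
    linarith [congrFun hshift j]
  simp only [hψφ, midpoint_iSup_iInf_add_const, ← hm] at hψm₁ hψm₂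
  have ht₀ : t = 0 := by
    have hlt : (t : ℝ) < 1 := by nlinarith [Real.pi_pos]
    have hgt : (-1 : ℝ) < t := by nlinarith [Real.pi_pos]
    have : t < 1 ∧ -1 < t := ⟨by exact_mod_cast hlt, by exact_mod_cast hgt⟩
    omega
  funext j
  simp [hψφ, ht₀]

theorem phases_eq {A : Matrix (Fin n) (Fin n) ℂ} {φ : Fin n → ℝ} (h : IsCanonicalPhases A φ) :
    phases A = φ := by
  have hex : ∃ ψ, IsCanonicalPhases A ψ := ⟨φ, h⟩
  rw [phases, dif_pos hex]
  exact h.unique hex.choose_spec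

section SortedPhases

variable {S : Matrix (Fin n) (Fin n) ℂ} {θ : Fin n → ℝ}

theorem isCanonicalPhases_comp_sort (hS : IsUnit S) (hθ : ∀ k, θ k ∈ Set.Ico 0 π) :
    IsCanonicalPhases (Sᴴ * phaseDiag θ * S) (θ ∘ Tuple.sort (OrderDual.toDual ∘ θ)) := by
  set σ := Tuple.sort (OrderDual.toDual ∘ θ)
  have hθσ : ∀ k, (θ ∘ σ) k ∈ Set.Ico 0 π := fun k => hθ (σ k)
  have hsup : 0 ≤ ⨆ k, (θ ∘ σ) k ∧ ⨆ k, (θ ∘ σ) k ≤ π :=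
    ⟨Real.iSup_nonneg fun k => (hθσ k).1, Real.iSup_le (fun k => (hθσ k).2.le) Real.pi_pos.le⟩
  have hinf : 0 ≤ ⨅ k, (θ ∘ σ) k ∧ ⨅ k, (θ ∘ σ) k ≤ π := by
    refine ⟨Real.iInf_nonneg fun k => (hθσ k).1, ?_⟩
    rcases isEmpty_or_nonempty (Fin n) with _ | ⟨⟨k⟩⟩
    · rw [Real.iInf_of_isEmpty]
      exact Real.pi_pos.le
    · exact (ciInf_le (Finite.bddBelow_range _) k).trans (hθσ k).2.le
  refine ⟨monotone_toDual_comp_iff.mp (Tuple.monotone_sort _),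
    fun i j => by linarith [(hθσ i).2, (hθσ j).1], by linarith [Real.pi_pos], by linarith,
    S.submatrix σ id, isUnit_submatrix_equiv_id hS σ, ?_⟩
  rw [phaseDiag, phaseDiag, ← conjTranspose_mul_diagonal_mul_submatrix S _ σ]
  rfl

theorem phases_conjTranspose_mul_phaseDiag_mul (hS : IsUnit S) (hθ : ∀ k, θ k ∈ Set.Ico 0 π) :
    phases (Sᴴ * phaseDiag θ * S) = θ ∘ Tuple.sort (OrderDual.toDual ∘ θ) :=
  phases_eq (isCanonicalPhases_comp_sort hS hθ)

theorem positiveImaginary_conjTranspose_mul_phaseDiag_mul (hS : IsUnit S)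
    (hθ : ∀ k, θ k ∈ Set.Ico 0 π) : PositiveImaginary (Sᴴ * phaseDiag θ * S) := by
  refine ⟨(isCanonicalPhases_comp_sort hS hθ).isSectorial, fun k => ?_⟩
  rw [phases_conjTranspose_mul_phaseDiag_mul hS hθ]
  exact hθ _

theorem map_phases_conjTranspose_mul_phaseDiag_mul (hS : IsUnit S)
    (hθ : ∀ k, θ k ∈ Set.Ico 0 π) :
    Finset.univ.val.map (phases (Sᴴ * phaseDiag θ * S)) = Finset.univ.val.map θ := by
  rw [phases_conjTranspose_mul_phaseDiag_mul hS hθ, ← Multiset.map_map,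
    Multiset.map_univ_val_equiv]

theorem prank_conjTranspose_mul_phaseDiag_mul (hS : IsUnit S) (hθ : ∀ k, θ k ∈ Set.Ico 0 π) :
    prank (Sᴴ * phaseDiag θ * S) = {k | θ k ≠ 0}.ncard := by
  rw [prank, phases_conjTranspose_mul_phaseDiag_mul hS hθ]
  exact Set.ncard_preimage_of_injective_subset_range (s := {k | θ k ≠ 0}) (Equiv.injective _)
    (by simp)

end SortedPhases

theorem phaseDiag_ite_zero_right (p : Fin n → Prop) [DecidablePred p] (a : Fin n → ℝ) :
    phaseDiag (fun k => if p k then a k else 0)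
      = diagonal fun k => if p k then exp (I * a k) else 1 := by
  rw [phaseDiag]
  congr 1
  funext k
  split_ifs <;> simp

theorem phaseDiag_ite_zero_left (p : Fin n → Prop) [DecidablePred p] (a : Fin n → ℝ) :
    phaseDiag (fun k => if p k then 0 else a k)
      = diagonal fun k => if p k then 1 else exp (I * a k) := by
  rw [phaseDiag]
  congr 1
  funext k
  split_ifs <;> simp

theorem inv_mul_mul_inv_of_phaseDiag {T : Matrix (Fin n) (Fin n) ℂ} (hT : IsUnit T)
    (χ φ : Fin n → ℝ) :
    (Tᴴ * phaseDiag χ * T)⁻¹ * (Tᴴ * phaseDiag φ * T) * (Tᴴ * phaseDiag χ * T)⁻¹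
      = T⁻¹ * phaseDiag (fun k => φ k - 2 * χ k) * (T⁻¹)ᴴ := by
  rw [phaseDiag, phaseDiag, inv_mul_mul_inv_of_conjTranspose_mul_diagonal_mul hT
    (fun k => exp_ne_zero _), phaseDiag]
  congr 3
  funext k
  simp only [Pi.mul_apply, Pi.inv_apply, ← exp_neg, ← exp_add]
  push_cast
  ring_nf

theorem ncard_setOf_ne_zero_le {M : Type*} [Zero M] {f : Fin n → M} {r : ℕ}
    (hf : ∀ k : Fin n, r ≤ k → f k = 0) : {k | f k ≠ 0}.ncard ≤ r :=
  calc {k | f k ≠ 0}.ncard ≤ (Set.Iio r).ncard :=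
        Set.ncard_le_ncard_of_injOn Fin.val (fun k hk => not_le.mp fun h => hk (hf k h))
          Fin.val_injective.injOn
    _ = r := Set.ncard_Iio_nat r

theorem truncation_properties_general
    (A T : Matrix (Fin n) (Fin n) ℂ) (φ : Fin n → ℝ)
    (hT : IsUnit T)
    (hφ0 : ∀ k, 0 ≤ φ k) (hφπ : ∀ k, φ k < Real.pi)
    (hdec : A = Tᴴ * phaseDiag φ * T)
    (r : ℕ)
    (E : Matrix (Fin n) (Fin n) ℂ)
    (hE : E = Tᴴ * Matrix.diagonal (fun k : Fin n =>
      if (k : ℕ) < r then Complex.exp (Complex.I * ((φ k / 2 : ℝ) : ℂ)) else 1) * T) :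
    IsSectorial E ∧ prank E ≤ r ∧
    E⁻¹ * A * E⁻¹ = T⁻¹ * Matrix.diagonal (fun k : Fin n =>
      if (k : ℕ) < r then 1 else Complex.exp (Complex.I * (φ k : ℂ))) * (T⁻¹)ᴴ ∧
    PositiveImaginary (E⁻¹ * A * E⁻¹) ∧
    Finset.univ.val.map (phases (E⁻¹ * A * E⁻¹)) =
      Finset.univ.val.map (fun k : Fin n => if (k : ℕ) < r then 0 else φ k) := by
  set χ : Fin n → ℝ := fun k => if (k : ℕ) < r then φ k / 2 else 0
  set θ : Fin n → ℝ := fun k => if (k : ℕ) < r then 0 else φ k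
  have hχ : ∀ k, χ k ∈ Set.Ico 0 π := fun k => by
    simp only [χ]
    split_ifs <;> constructor <;> linarith [hφ0 k, hφπ k, Real.pi_pos]
  have hθ : ∀ k, θ k ∈ Set.Ico 0 π := fun k => by
    simp only [θ]
    split_ifs <;> constructor <;> linarith [hφ0 k, hφπ k, Real.pi_pos]
  have hEχ : E = Tᴴ * phaseDiag χ * T := by rw [hE, phaseDiag_ite_zero_right]
  have hθχ : θ = fun k => φ k - 2 * χ k := by
    funext k
    simp only [θ, χ]
    split_ifs <;> ring
  have hB : E⁻¹ * A * E⁻¹ = (T⁻¹)ᴴᴴ * phaseDiag θ * (T⁻¹)ᴴ := by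
    rw [hEχ, hdec, inv_mul_mul_inv_of_phaseDiag hT, hθχ, conjTranspose_conjTranspose]
  have hS : IsUnit (T⁻¹)ᴴ := (isUnit_conjTranspose _).mpr (isUnit_nonsing_inv_iff.mpr hT)
  refine ⟨hEχ ▸ (isCanonicalPhases_comp_sort hT hχ).isSectorial, ?_,
    by rw [hB, conjTranspose_conjTranspose, phaseDiag_ite_zero_left],
    hB ▸ positiveImaginary_conjTranspose_mul_phaseDiag_mul hS hθ,
    hB ▸ map_phases_conjTranspose_mul_phaseDiag_mul hS hθ⟩
  rw [hEχ, prank_conjTranspose_mul_phaseDiag_mul hT hχ]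
  exact ncard_setOf_ne_zero_le fun k hk => if_neg (not_lt.mpr hk)

/-- properties of the `r`-half-truncation `Ê`. -/
theorem truncation_properties
    (hn : 1 ≤ n) (A T : Matrix (Fin n) (Fin n) ℂ) (φ : Fin n → ℝ)
    (hA : PositiveImaginary A) (hT : IsUnit T)
    (hφsort : Antitone φ) (hφ0 : ∀ k, 0 ≤ φ k) (hφπ : ∀ k, φ k < Real.pi)
    (hdec : A = Tᴴ * phaseDiag φ * T)
    (r : ℕ) (hr : r ≤ n)
    (E : Matrix (Fin n) (Fin n) ℂ)
    (hE : E = Tᴴ * Matrix.diagonal (fun k : Fin n =>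
      if (k : ℕ) < r then Complex.exp (Complex.I * ((φ k / 2 : ℝ) : ℂ)) else 1) * T) :
    IsSectorial E ∧ prank E ≤ r ∧
    E⁻¹ * A * E⁻¹ = T⁻¹ * Matrix.diagonal (fun k : Fin n =>
      if (k : ℕ) < r then 1 else Complex.exp (Complex.I * (φ k : ℂ))) * (T⁻¹)ᴴ ∧
    PositiveImaginary (E⁻¹ * A * E⁻¹) ∧
    Finset.univ.val.map (phases (E⁻¹ * A * E⁻¹)) =
      Finset.univ.val.map (fun k : Fin n => if (k : ℕ) < r then 0 else φ k) :=
  truncation_properties_general A T φ hT hφ0 hφπ hdec r E hE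

end LowPrank
end
end

section
/- Let A = diag(11+i, 11−i) ∈ ℂ^{2×2} and M = [[10, −√2],[−√2, 10]]. Then M is Hermitian positive definite, A is sectorial with prank(A) = 2, and rank(A − M) = 1; in particular, for this A the inequality prank(A) ≥ min{ rank(A − M') : M' Hermitian positive definite } is strict. -/
noncomputable section

open Matrix
open scoped Classical ComplexOrder

namespace LowPrank

variable {n : ℕ}

/-!
`A = diag(z, z̄)` with `z = 11 + i` has the sectorial decomposition `T = √|z| · 1`,
`D = diag(e^{i arg z}, e^{-i arg z})`, which is already in canonical form. No canonical phase of
`A` can vanish, whatever decomposition realizes it: `A - Aᴴ = Tᴴ (D - Dᴴ) T` with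
`D - Dᴴ = diag(2i sin φₖ)`, and `A - Aᴴ = diag(2i, -2i)` is nonsingular. Hence `prank A = 2`.
On the other side `M = (10 - √2) · 1 + √2 · v vᴴ` with `v = (1, -1)` is positive definite and
`A - M = (1 + i, √2)ᵀ (1, √2 (1 - i) / 2)` has rank one.
-/

theorem _root_.Antitone.ciSup_eq_apply_zero {α : Type*} [ConditionallyCompleteLattice α] {m : ℕ}
    {f : Fin (m + 1) → α} (hf : Antitone f) : ⨆ i, f i = f 0 :=
  le_antisymm (ciSup_le fun i => hf (Fin.zero_le i))
    (le_ciSup ⟨f 0, Set.forall_mem_range.2 fun i => hf (Fin.zero_le i)⟩ 0)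

theorem _root_.Antitone.ciInf_eq_apply_last {α : Type*} [ConditionallyCompleteLattice α] {m : ℕ}
    {f : Fin (m + 1) → α} (hf : Antitone f) : ⨅ i, f i = f (Fin.last m) :=
  le_antisymm (ciInf_le ⟨f (Fin.last m), Set.forall_mem_range.2 fun i => hf (Fin.le_last i)⟩ _)
    (le_ciInf fun i => hf (Fin.le_last i))

theorem _root_.Matrix.one_le_rank_of_apply_ne_zero {K m n : Type*} [Field K] [Fintype n]
    {B : Matrix m n K} {i : m} {j : n} (h : B i j ≠ 0) : 1 ≤ B.rank := by
  have hentry : (B.submatrix (fun _ : Fin 1 => i) fun _ : Fin 1 => j).rank = 1 := by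
    rw [rank_of_det_ne_zero (by simpa using h), Fintype.card_fin]
  exact hentry ▸ rank_submatrix_le B _ _

theorem _root_.Matrix.rank_vecMulVec_eq_one {K m n : Type*} [Field K] [Fintype n]
    {w : m → K} {v : n → K} (hw : w ≠ 0) (hv : v ≠ 0) : (vecMulVec w v).rank = 1 := by
  obtain ⟨i, hi⟩ := Function.ne_iff.1 hw
  obtain ⟨j, hj⟩ := Function.ne_iff.1 hv
  exact (rank_vecMulVec_le w v).antisymm
    (one_le_rank_of_apply_ne_zero (i := i) (j := j) (by simpa [vecMulVec_apply] using ⟨hi, hj⟩))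

theorem posDef_vec2_neg_offDiag {a b : ℝ} (hb : 0 ≤ b) (hba : b < a) :
    (!![(a : ℂ), -(b : ℂ); -(b : ℂ), (a : ℂ)]).PosDef := by
  have hsplit : !![(a : ℂ), -(b : ℂ); -(b : ℂ), (a : ℂ)] =
      (a - b) • (1 : Matrix (Fin 2) (Fin 2) ℂ) + b • vecMulVec ![1, -1] (star ![1, -1]) := by
    ext i j
    rw [Matrix.add_apply, Matrix.smul_apply, Matrix.smul_apply, vecMulVec_apply]
    fin_cases i <;> fin_cases j <;> simp [Complex.real_smul]
  rw [hsplit]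
  exact (PosDef.one.smul (sub_pos.2 hba)).add_posSemidef
    ((posSemidef_vecMulVec_self_star _).smul hb)

theorem isSectorial_diagonal {d : Fin n → ℂ} (hd : ∀ k, 0 < (d k).re) :
    IsSectorial (diagonal d) := by
  intro x hx h0
  obtain ⟨k, hk⟩ : ∃ k, x k ≠ 0 := by
    by_contra! hx0
    simp [show x = 0 from funext hx0] at hx
  have hterm : ∀ k, (star x k * (diagonal d *ᵥ x) k).re = (d k).re * Complex.normSq (x k) := by
    intro k
    rw [mulVec_diagonal, Pi.star_apply, mul_left_comm, Complex.star_def,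
      ← Complex.normSq_eq_conj_mul_self, Complex.re_mul_ofReal]
  have hpos : 0 < (star x ⬝ᵥ diagonal d *ᵥ x).re := by
    rw [dotProduct, Complex.re_sum]
    simp_rw [hterm]
    exact Finset.sum_pos' (fun k _ => mul_nonneg (hd k).le (Complex.normSq_nonneg _))
      ⟨k, Finset.mem_univ k, mul_pos (hd k) (Complex.normSq_pos.2 hk)⟩
  simp [h0] at hpos

theorem isSectorialDecomp_diagonal {d : Fin n → ℂ} (hd : ∀ k, d k ≠ 0) :
    IsSectorialDecomp (diagonal d) (diagonal fun k => ((√‖d k‖ : ℝ) : ℂ)) fun k => (d k).arg := by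
  refine ⟨isUnit_diagonal.2 (Pi.isUnit_iff.2 fun k => ?_), ?_⟩
  · simpa using hd k
  · rw [phaseDiag, diagonal_conjTranspose, diagonal_mul_diagonal, diagonal_mul_diagonal]
    congr 1
    funext k
    have hsqrt : ((√‖d k‖ : ℝ) : ℂ) * (√‖d k‖ : ℝ) = ‖d k‖ := by
      rw [← Complex.ofReal_mul, Real.mul_self_sqrt (norm_nonneg _)]
    calc d k = ‖d k‖ * Complex.exp ((d k).arg * Complex.I) :=
          (Complex.norm_mul_exp_arg_mul_I _).symm
      _ = star ((√‖d k‖ : ℝ) : ℂ) * Complex.exp (Complex.I * (d k).arg) * (√‖d k‖ : ℝ) := by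
          rw [Complex.star_def, Complex.conj_ofReal, ← hsqrt, mul_comm _ Complex.I]
          ring

theorem isCanonicalPhases_vec2 {A : Matrix (Fin 2) (Fin 2) ℂ} {a b : ℝ} (hba : b ≤ a)
    (hab : a - b < Real.pi) (hlo : -Real.pi < (a + b) / 2) (hhi : (a + b) / 2 ≤ Real.pi)
    (hT : ∃ T, IsSectorialDecomp A T ![a, b]) : IsCanonicalPhases A ![a, b] := by
  have hanti : Antitone ![a, b] := by
    intro i j hij
    fin_cases i <;> fin_cases j <;> simp_all
  have hspread : ∀ i j, ![a, b] i - ![a, b] j < Real.pi := by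
    intro i j
    fin_cases i <;> fin_cases j <;> simp <;> linarith [Real.pi_pos]
  have hmid : ((⨆ i, ![a, b] i) + ⨅ i, ![a, b] i) / 2 = (a + b) / 2 := by
    rw [hanti.ciSup_eq_apply_zero, hanti.ciInf_eq_apply_last]
    rfl
  exact ⟨hanti, hspread, hmid ▸ hlo, hmid ▸ hhi, hT⟩

theorem exists_isCanonicalPhases_diagonal_vec2 {z w : ℂ} (hz : 0 < z.re) (hw : 0 < w.re)
    (hzi : 0 ≤ z.im) (hwi : w.im ≤ 0) : ∃ φ, IsCanonicalPhases (diagonal ![z, w]) φ := by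
  have hz_lt : z.arg < Real.pi / 2 := Complex.arg_lt_pi_div_two_iff.2 (Or.inl hz)
  have hw_gt : -(Real.pi / 2) < w.arg := Complex.neg_pi_div_two_lt_arg_iff.2 (Or.inl hw)
  have hz_nonneg : 0 ≤ z.arg := Complex.arg_nonneg_iff.2 hzi
  have hw_nonpos : w.arg ≤ 0 := by
    rcases hwi.lt_or_eq with hwi | hwi
    · exact (Complex.arg_neg_iff.2 hwi).le
    · exact (Complex.arg_eq_zero_iff.2 ⟨hw.le, hwi⟩).le
  have hdecomp := isSectorialDecomp_diagonal (d := ![z, w]) fun k => by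
    fin_cases k
    exacts [Complex.ne_zero_of_re_pos hz, Complex.ne_zero_of_re_pos hw]
  have hφ : (fun k => (![z, w] k).arg) = ![z.arg, w.arg] := by
    ext k
    fin_cases k <;> rfl
  exact ⟨![z.arg, w.arg], isCanonicalPhases_vec2 (by linarith) (by linarith) (by linarith) (by linarith)
    ⟨_, hφ ▸ hdecomp⟩⟩

theorem phase_ne_zero_of_det_sub_conjTranspose_ne_zero {A T : Matrix (Fin n) (Fin n) ℂ}
    {φ : Fin n → ℝ} (hA : A = Tᴴ * phaseDiag φ * T) (hdet : (A - Aᴴ).det ≠ 0) (k : Fin n) :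
    φ k ≠ 0 := by
  intro hk
  apply hdet
  have hskew : A - Aᴴ = Tᴴ * (phaseDiag φ - (phaseDiag φ)ᴴ) * T := by
    rw [hA]
    simp only [conjTranspose_mul, conjTranspose_conjTranspose, mul_sub, sub_mul, mul_assoc]
  rw [hskew, det_mul, det_mul, phaseDiag, diagonal_conjTranspose, Pi.star_def, diagonal_sub,
    det_diagonal, Finset.prod_eq_zero (Finset.mem_univ k) (by simp [hk]), mul_zero, zero_mul]

theorem prank_eq_of_det_sub_conjTranspose_ne_zero {A : Matrix (Fin n) (Fin n) ℂ}
    (hφ : ∃ φ, IsCanonicalPhases A φ) (hdet : (A - Aᴴ).det ≠ 0) : prank A = n := by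
  obtain ⟨-, -, -, -, T, -, hT⟩ := hφ.choose_spec
  have hne : ∀ k, phases A k ≠ 0 := by
    rw [phases, dif_pos hφ]
    exact phase_ne_zero_of_det_sub_conjTranspose_ne_zero hT hdet
  simp [prank, hne]

theorem rank_sub_eq_one_example :
    (!![11 + Complex.I, 0; 0, 11 - Complex.I] -
      !![(10 : ℂ), -((Real.sqrt 2 : ℝ) : ℂ); -((Real.sqrt 2 : ℝ) : ℂ), (10 : ℂ)]).rank = 1 := by
  have hsq : ((√2 : ℝ) : ℂ) * (√2 : ℝ) = 2 := by
    rw [← Complex.ofReal_mul, Real.mul_self_sqrt zero_le_two, Complex.ofReal_ofNat]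
  have hfactor : !![11 + Complex.I, 0; 0, 11 - Complex.I] -
      !![(10 : ℂ), -((Real.sqrt 2 : ℝ) : ℂ); -((Real.sqrt 2 : ℝ) : ℂ), (10 : ℂ)] =
      vecMulVec ![1 + Complex.I, (√2 : ℝ)] ![1, (√2 : ℝ) * (1 - Complex.I) / 2] := by
    ext i j
    rw [vecMulVec_apply]
    fin_cases i <;> fin_cases j <;> simp
    · ring
    · linear_combination ((√2 : ℝ) : ℂ) / 2 * Complex.I_sq
    · linear_combination (Complex.I - 1) / 2 * hsq
  rw [hfactor]
  exact rank_vecMulVec_eq_one (fun h => by simpa using congrFun h 1)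
    (fun h => one_ne_zero (congrFun h 0))

/-- explicit example where `prank A > min rank (A - M')` over `M' ≻ 0`. -/
theorem prank_gt_min_rank_example :
    ∀ A M : Matrix (Fin 2) (Fin 2) ℂ,
      A = !![11 + Complex.I, 0; 0, 11 - Complex.I] →
      M = !![(10 : ℂ), -((Real.sqrt 2 : ℝ) : ℂ); -((Real.sqrt 2 : ℝ) : ℂ), (10 : ℂ)] →
      M.PosDef ∧ IsSectorial A ∧ prank A = 2 ∧ (A - M).rank = 1 ∧
      sInf {k : ℕ | ∃ M' : Matrix (Fin 2) (Fin 2) ℂ, M'.PosDef ∧ (A - M').rank = k} < prank A := by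
  intro A M hA hM
  have hdiag : A = diagonal ![11 + Complex.I, 11 - Complex.I] := hA.trans (diagonal_vec2 _ _).symm
  have hMpos : M.PosDef := by
    simpa [hM] using posDef_vec2_neg_offDiag (Real.sqrt_nonneg 2)
      ((Real.sqrt_lt' (by norm_num : (0 : ℝ) < 10)).2 (by norm_num))
  have hrank : (A - M).rank = 1 := hA ▸ hM ▸ rank_sub_eq_one_example
  have hprank : prank A = 2 := by
    rw [hdiag]
    refine prank_eq_of_det_sub_conjTranspose_ne_zero
      (exists_isCanonicalPhases_diagonal_vec2 (by simp) (by simp) (by simp) (by simp)) ?_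
    rw [diagonal_conjTranspose, diagonal_sub, det_diagonal, Fin.prod_univ_two]
    norm_num [Complex.ext_iff]
  refine ⟨hMpos, hdiag ▸ isSectorial_diagonal fun k => ?_, hprank, hrank, ?_⟩
  · fin_cases k <;> simp
  · rw [hprank]
    exact lt_of_le_of_lt (Nat.sInf_le ⟨M, hMpos, hrank⟩) one_lt_two

end LowPrank
end
end

section
/- Let n ≥ 1, 0 ≤ r ≤ n, and let a ∈ ℝⁿ satisfy π/2 > a₁ ≥ a₂ ≥ ⋯ ≥ aₙ ≥ 0. Let x ∈ ℝⁿ be any vector with x₁ ≥ x₂ ≥ ⋯ ≥ xₙ, 0 ≤ x_k < π/2 for all k, and x_k = 0 for all k > r. Then the vector (0,…,0,a_{r+1},…,aₙ) (first r entries zero) is weakly submajorized by the vector (|a₁−x₁|,…,|aₙ−xₙ|): for every ℓ ∈ {1,…,n}, Σ_{k=r+1}^{min(n,r+ℓ)} a_k is at most the sum of the ℓ largest entries of (|a₁−x₁|,…,|aₙ−xₙ|). -/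
/-! For `k ≥ r` we have `x k = 0`, so there the truncated vector agrees with `|a - x|`; its
partial sum of length `ℓ` is therefore a sum of at most `ℓ` (nonnegative) entries of `|a - x|`,
and such a sum never exceeds the sum of the `ℓ` largest entries. -/

noncomputable section

open Matrix
open scoped Classical ComplexOrder

namespace LowPrank

variable {n : ℕ}

/-- The sum of the `m` largest entries of a multiset of reals. -/
noncomputable def sumLargest (s : Multiset ℝ) (m : ℕ) : ℝ :=
  ((s.sort (· ≤ ·)).reverse.take m).sum

theorem _root_.List.Sublist.sum_le_sum_take {M : Type*} [AddCommMonoid M] [Preorder M]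
    [AddLeftMono M] {u d : List M} (h : u.Sublist d) (hd : d.Pairwise (· ≥ ·)) :
    u.sum ≤ (d.take u.length).sum := by
  induction h with
  | slnil => simp
  | @cons u d a h ih =>
    obtain ⟨ha, hd⟩ := List.pairwise_cons.mp hd
    cases u with
    | nil => simp
    | cons b u =>
      have hk : u.length < d.length := h.length_le
      calc (b :: u).sum ≤ (d.take (u.length + 1)).sum := ih hd
        _ = (d.take u.length).sum + d[u.length] := List.sum_take_succ d u.length hk
        _ ≤ (d.take u.length).sum + a := by grw [ha _ (List.getElem_mem hk)]
        _ = ((a :: d).take (b :: u).length).sum := by simp [add_comm]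
  | cons_cons a h ih =>
    simpa using add_le_add_right (ih (List.pairwise_cons.mp hd).2) a

theorem _root_.List.sum_take_mono {M : Type*} [AddCommMonoid M] [Preorder M] [AddLeftMono M]
    {l : List M} (hl : ∀ x ∈ l, 0 ≤ x) {m m' : ℕ} (h : m ≤ m') :
    (l.take m).sum ≤ (l.take m').sum :=
  (l.take_sublist_take_left h).sum_le_sum fun x hx => hl x (List.mem_of_mem_take hx)

theorem sum_le_sumLargest_of_le {s t : Multiset ℝ} (hts : t ≤ s) :
    t.sum ≤ sumLargest s (Multiset.card t) := by
  set d := (s.sort (· ≤ ·)).reverse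
  have hd : d.Pairwise (· ≥ ·) := List.pairwise_reverse.mpr (Multiset.pairwise_sort s _)
  have hds : (d : Multiset ℝ) = s := by simp [d, Multiset.sort_eq]
  rw [← hds, ← Multiset.coe_toList t, Multiset.coe_le] at hts
  obtain ⟨u, hu, hud⟩ := hts
  rw [← Multiset.coe_toList t, Multiset.sum_coe, Multiset.coe_card, ← hu.sum_eq, ← hu.length_eq]
  exact hud.sum_le_sum_take hd

theorem sumLargest_mono {s : Multiset ℝ} (hs : ∀ x ∈ s, 0 ≤ x) {m m' : ℕ} (h : m ≤ m') :
    sumLargest s m ≤ sumLargest s m' :=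
  List.sum_take_mono (fun x hx => hs x (by simpa using hx)) h

theorem sum_le_sumLargest_of_subset {ι : Type*} {f : ι → ℝ} {s t : Finset ι} (hts : t ⊆ s)
    (hf : ∀ i ∈ s, 0 ≤ f i) {m : ℕ} (hm : t.card ≤ m) :
    ∑ i ∈ t, f i ≤ sumLargest (s.val.map f) m :=
  calc ∑ i ∈ t, f i ≤ sumLargest (s.val.map f) t.card := by
        simpa using sum_le_sumLargest_of_le (Multiset.map_le_map (Finset.val_le_iff.mpr hts))
    _ ≤ sumLargest (s.val.map f) m := sumLargest_mono (by simpa using hf) hm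

theorem truncated_weakly_submajorized_general
    (r : ℕ) (a x : Fin n → ℝ)
    (ha0 : ∀ k, 0 ≤ a k)
    (hxr : ∀ k : Fin n, r ≤ (k : ℕ) → x k = 0) :
    ∀ ℓ : ℕ, 1 ≤ ℓ → ℓ ≤ n →
      (∑ k ∈ Finset.univ.filter (fun k : Fin n => r ≤ (k : ℕ) ∧ (k : ℕ) < r + ℓ), a k) ≤
      sumLargest (Finset.univ.val.map (fun k : Fin n => |a k - x k|)) ℓ := by
  intro ℓ _ _
  set F := Finset.univ.filter (fun k : Fin n => r ≤ (k : ℕ) ∧ (k : ℕ) < r + ℓ)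
  have hcard : F.card ≤ ℓ :=
    calc F.card ≤ (Finset.Ico r (r + ℓ)).card :=
          Finset.card_le_card_of_injOn Fin.val (fun k hk => by simpa [F] using hk)
            Fin.val_injective.injOn
      _ = ℓ := by simp
  have hsupport : ∑ k ∈ F, a k = ∑ k ∈ F, |a k - x k| := by
    refine Finset.sum_congr rfl fun k hk => ?_
    rw [hxr k (Finset.mem_filter.mp hk).2.1, sub_zero, abs_of_nonneg (ha0 k)]
  rw [hsupport]
  exact sum_le_sumLargest_of_subset F.subset_univ (fun k _ => abs_nonneg _) hcard

/-- the truncated vector is weakly submajorized by `|a - x|`. -/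
theorem truncated_weakly_submajorized
    (hn : 1 ≤ n) (r : ℕ) (hr : r ≤ n) (a x : Fin n → ℝ)
    (ha0 : ∀ k, 0 ≤ a k) (haπ : ∀ k, a k < Real.pi / 2) (hasort : Antitone a)
    (hxsort : Antitone x) (hx0 : ∀ k, 0 ≤ x k) (hxπ : ∀ k, x k < Real.pi / 2)
    (hxr : ∀ k : Fin n, r ≤ (k : ℕ) → x k = 0) :
    ∀ ℓ : ℕ, 1 ≤ ℓ → ℓ ≤ n →
      (∑ k ∈ Finset.univ.filter (fun k : Fin n => r ≤ (k : ℕ) ∧ (k : ℕ) < r + ℓ), a k) ≤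
      sumLargest (Finset.univ.val.map (fun k : Fin n => |a k - x k|)) ℓ :=
  truncated_weakly_submajorized_general r a x ha0 hxr

end LowPrank
end
end

section
/- Let A ∈ ℂ^{n×n} be sectorial and suppose its numerical range W(A) contains no positive real number, i.e., x*Ax ∉ ℝ_{>0} for every x ∈ ℂⁿ with ‖x‖₂ = 1. Then A has full phase-rank: prank(A) = n. -/
noncomputable section

open Matrix
open scoped Classical ComplexOrder

namespace LowPrank

variable {n : ℕ}

/-!
If some canonical phase `φ k` vanished, then in `A = Tᴴ diag (e^{iφ}) T` the vector
`x = T⁻¹ eₖ` would satisfy `x* A x = 1`, and `x* A x / ‖x‖²` would be a positive real number in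
the numerical range. The substance is that canonical phases exist. The numerical range is
convex (Toeplitz–Hausdorff) and compact, so a sectorial `A` has a rotation `e^{iθ} A = H + i K`
with `H` positive definite. Writing `H = Cᴴ C` and diagonalising the Hermitian matrix
`C⁻ᴴ K C⁻¹` makes `e^{iθ} A` congruent to `diag (1 + i μⱼ)`, whose entries have arguments in
`(-π/2, π/2)`. Sorting these phases, undoing the rotation and shifting by a multiple of `2π`
gives the canonical normalization.
-/

section NumericalRange

open Complex ComplexConjugate

variable {ι : Type*} [Fintype ι]

def numericalRange (A : Matrix ι ι ℂ) : Set ℂ :=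
  {z | ∃ x : ι → ℂ, star x ⬝ᵥ x = 1 ∧ star x ⬝ᵥ A *ᵥ x = z}

lemma star_smul_dotProduct_mulVec_smul (A : Matrix ι ι ℂ) (c : ℂ) (x : ι → ℂ) :
    star (c • x) ⬝ᵥ A *ᵥ (c • x) = star c * c * (star x ⬝ᵥ A *ᵥ x) := by
  simp only [mulVec_smul, star_smul, smul_dotProduct, dotProduct_smul, smul_eq_mul]
  ring

lemma star_smul_dotProduct_smul (c : ℂ) (x : ι → ℂ) :
    star (c • x) ⬝ᵥ (c • x) = star c * c * (star x ⬝ᵥ x) := by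
  simp only [star_smul, smul_dotProduct, dotProduct_smul, smul_eq_mul]
  ring

lemma star_dotProduct_self_eq_ofReal (x : ι → ℂ) :
    star x ⬝ᵥ x = ((star x ⬝ᵥ x).re : ℂ) := by
  conv_lhs => rw [← re_add_im (star x ⬝ᵥ x)]
  simp [(nonneg_iff.mp (dotProduct_star_self_nonneg x)).2.symm]

lemma re_star_dotProduct_self_pos {x : ι → ℂ} (hx : x ≠ 0) : 0 < (star x ⬝ᵥ x).re :=
  (lt_def.mp (dotProduct_star_self_pos_iff.mpr hx)).1

lemma div_mem_numericalRange (A : Matrix ι ι ℂ) {x : ι → ℂ} (hx : x ≠ 0) :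
    (star x ⬝ᵥ A *ᵥ x) / (star x ⬝ᵥ x) ∈ numericalRange A := by
  set m := (star x ⬝ᵥ x).re
  have hm : 0 < m := re_star_dotProduct_self_pos hx
  have hxx : star x ⬝ᵥ x = m := star_dotProduct_self_eq_ofReal x
  set c : ℂ := (((√m)⁻¹ : ℝ) : ℂ)
  have hc : star c * c = (m : ℂ)⁻¹ := by
    rw [star_def, conj_ofReal, ← ofReal_mul, ← mul_inv,
      Real.mul_self_sqrt hm.le, ofReal_inv]
  refine ⟨c • x, ?_, ?_⟩
  · rw [star_smul_dotProduct_smul, hc, hxx, inv_mul_cancel₀ (by exact_mod_cast hm.ne')]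
  · rw [star_smul_dotProduct_mulVec_smul, hc, hxx, div_eq_inv_mul]

lemma star_dotProduct_mulVec_ofReal_smul_add (A : Matrix ι ι ℂ) (a b : ℝ) (x y : ι → ℂ) :
    star ((a : ℂ) • x + (b : ℂ) • y) ⬝ᵥ A *ᵥ ((a : ℂ) • x + (b : ℂ) • y)
      = a ^ 2 * (star x ⬝ᵥ A *ᵥ x) + a * b * (star x ⬝ᵥ A *ᵥ y + star y ⬝ᵥ A *ᵥ x)
        + b ^ 2 * (star y ⬝ᵥ A *ᵥ y) := by
  simp only [mulVec_add, mulVec_smul, star_add, star_smul, add_dotProduct, dotProduct_add,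
    smul_dotProduct, dotProduct_smul, smul_eq_mul, star_def, conj_ofReal]
  ring

lemma exists_unit_rotation_im_cross_eq_zero (B : Matrix ι ι ℂ) (x y : ι → ℂ) :
    ∃ e : ℂ, star e * e = 1 ∧
      (star (e • x) ⬝ᵥ B *ᵥ y + star y ⬝ᵥ B *ᵥ (e • x)).im = 0 := by
  set w := star x ⬝ᵥ B *ᵥ y - star (star y ⬝ᵥ B *ᵥ x)
  set e := exp (w.arg * I)
  have he : star e * e = 1 := by
    rw [star_def, conj_mul', norm_exp_ofReal_mul_I]; norm_num
  have hw : star e * w = ‖w‖ := by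
    conv_lhs => rw [← norm_mul_exp_arg_mul_I w]
    rw [mul_left_comm, he, mul_one]
  refine ⟨e, he, ?_⟩
  have key : star (e • x) ⬝ᵥ B *ᵥ y + star y ⬝ᵥ B *ᵥ (e • x)
      = star e * w + (e * (star y ⬝ᵥ B *ᵥ x) + star (e * (star y ⬝ᵥ B *ᵥ x))) := by
    simp only [w, star_smul, smul_dotProduct, mulVec_smul, dotProduct_smul, smul_eq_mul, star_mul']
    ring
  rw [key, hw, add_im, add_im, star_def, conj_im,
    ofReal_im]
  ring

lemma ofReal_mem_numericalRange_of_zero_mem_of_one_mem (B : Matrix ι ι ℂ)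
    (h0 : (0 : ℂ) ∈ numericalRange B) (h1 : (1 : ℂ) ∈ numericalRange B) {t : ℝ}
    (ht : t ∈ Set.Icc 0 1) : (t : ℂ) ∈ numericalRange B := by
  obtain ⟨x, hx, hqx⟩ := h0
  obtain ⟨y, hy, hqy⟩ := h1
  obtain ⟨e, he, hcross⟩ := exists_unit_rotation_im_cross_eq_zero B x y
  set u := e • x
  have hu : star u ⬝ᵥ u = 1 := by rw [star_smul_dotProduct_smul, he, hx, one_mul]
  have hqu : star u ⬝ᵥ B *ᵥ u = 0 := by rw [star_smul_dotProduct_mulVec_smul, hqx, mul_zero]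
  -- `star z ⬝ᵥ B *ᵥ z` is real along the arc `Z`, which joins `u` to `y`
  set Z : ℝ → ι → ℂ := fun r => (Real.cos r : ℂ) • u + (Real.sin r : ℂ) • y
  have hZ : ∀ r, Z r ≠ 0 := by
    intro r hr
    have hr' : (Real.cos r : ℂ) • u = ((-Real.sin r : ℝ) : ℂ) • y := by
      rw [ofReal_neg, neg_smul, ← add_eq_zero_iff_eq_neg]; exact hr
    have hq := congrArg (fun v => star v ⬝ᵥ B *ᵥ v) hr'
    have hd := congrArg (fun v => star v ⬝ᵥ v) hr'
    simp only [star_smul_dotProduct_mulVec_smul, star_smul_dotProduct_smul, hqu, hqy, hu, hy,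
      star_def, conj_ofReal] at hq hd
    push_cast at hq hd
    have hs : Real.sin r ^ 2 = 0 :=
      ofReal_injective (by push_cast; linear_combination -hq)
    have hc : Real.cos r ^ 2 = Real.sin r ^ 2 :=
      ofReal_injective (by push_cast; linear_combination hd)
    nlinarith [Real.sin_sq_add_cos_sq r]
  set f : ℝ → ℂ := fun r => (star (Z r) ⬝ᵥ B *ᵥ Z r) / (star (Z r) ⬝ᵥ Z r)
  have hf : Continuous f :=
    .div (by fun_prop) (by fun_prop) fun r => (dotProduct_star_self_pos_iff.mpr (hZ r)).ne'
  have hf_im : ∀ r, (f r).im = 0 := by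
    intro r
    have hnum : (star (Z r) ⬝ᵥ B *ᵥ Z r).im = 0 := by
      simp only [Z, star_dotProduct_mulVec_ofReal_smul_add, hqu, hqy, mul_zero, zero_add, mul_one,
        ← ofReal_mul, ← ofReal_pow, add_im, im_ofReal_mul,
        ofReal_im, hcross]
    have hden : (star (Z r) ⬝ᵥ Z r).im = 0 := by
      rw [star_dotProduct_self_eq_ofReal]; exact ofReal_im _
    simp [f, div_im, hnum, hden]
  obtain ⟨r, -, hr⟩ := intermediate_value_Icc (by positivity : (0 : ℝ) ≤ Real.pi / 2)
    (continuous_re.comp hf).continuousOn (a := 0)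
    (by simpa [f, Z, hqu, hqy, hu, hy] using ht)
  have hfr : f r = t := Complex.ext (by simpa using hr) (by simpa using hf_im r)
  exact hfr ▸ div_mem_numericalRange B (hZ r)

lemma numericalRange_smul_add_smul_one [DecidableEq ι] (A : Matrix ι ι ℂ) (c d : ℂ) :
    numericalRange (c • A + d • 1) = (fun z => c * z + d) '' numericalRange A := by
  have hq : ∀ x : ι → ℂ, star x ⬝ᵥ x = 1 →
      star x ⬝ᵥ (c • A + d • 1) *ᵥ x = c * (star x ⬝ᵥ A *ᵥ x) + d := fun x hx => by
    rw [add_mulVec, smul_mulVec, smul_mulVec, one_mulVec, dotProduct_add, dotProduct_smul,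
      dotProduct_smul, hx, smul_eq_mul, smul_eq_mul, mul_one]
  ext z
  constructor
  · rintro ⟨x, hx, rfl⟩
    exact ⟨_, ⟨x, hx, rfl⟩, (hq x hx).symm⟩
  · rintro ⟨_, ⟨x, hx, rfl⟩, rfl⟩
    exact ⟨x, hx, hq x hx⟩

theorem convex_numericalRange (A : Matrix ι ι ℂ) : Convex ℝ (numericalRange A) := by
  classical
  intro p hp q hq a b ha hb hab
  rcases eq_or_ne p q with rfl | hpq
  · rwa [← add_smul, hab, one_smul]
  have hqp : q - p ≠ 0 := sub_ne_zero.mpr hpq.symm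
  -- the affine map `z ↦ (z - p) / (q - p)` sends `p, q` to `0, 1`
  set c := (q - p)⁻¹
  have hW := numericalRange_smul_add_smul_one A c (-c * p)
  have h0 : (0 : ℂ) ∈ numericalRange (c • A + (-c * p) • 1) := hW ▸ ⟨p, hp, by ring⟩
  have h1 : (1 : ℂ) ∈ numericalRange (c • A + (-c * p) • 1) :=
    hW ▸ ⟨q, hq, by simp only [c]; field_simp; ring⟩
  obtain ⟨z, hz, hzb⟩ :=
    hW ▸ ofReal_mem_numericalRange_of_zero_mem_of_one_mem _ h0 h1 ⟨hb, by linarith⟩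
  convert hz using 1
  have ha' : (a : ℂ) = 1 - b := by rw [eq_sub_iff_add_eq]; exact_mod_cast hab
  simp only [c] at hzb
  field_simp at hzb
  rw [real_smul, real_smul, ha']
  linear_combination -hzb

lemma star_ofLp_dotProduct_ofLp (v : EuclideanSpace ℂ ι) :
    star v.ofLp ⬝ᵥ v.ofLp = (‖v‖ : ℂ) ^ 2 := by
  rw [dotProduct_comm, ← EuclideanSpace.inner_eq_star_dotProduct, inner_self_eq_norm_sq_to_K]
  rfl

theorem isCompact_numericalRange (A : Matrix ι ι ℂ) : IsCompact (numericalRange A) := by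
  have hunit : ∀ v : EuclideanSpace ℂ ι, star v.ofLp ⬝ᵥ v.ofLp = 1 ↔ ‖v‖ = 1 := fun v => by
    rw [star_ofLp_dotProduct_ofLp, ← ofReal_pow, ofReal_eq_one,
      pow_eq_one_iff_of_nonneg (norm_nonneg v) two_ne_zero]
  have hW : numericalRange A
      = (fun v : EuclideanSpace ℂ ι => star v.ofLp ⬝ᵥ A *ᵥ v.ofLp) '' Metric.sphere 0 1 := by
    ext z
    constructor
    · rintro ⟨x, hx, rfl⟩
      exact ⟨WithLp.toLp 2 x, by simpa [hunit] using hx, rfl⟩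
    · rintro ⟨v, hv, rfl⟩
      exact ⟨v.ofLp, (hunit v).mpr (by simpa using hv), rfl⟩
  rw [hW]
  exact (isCompact_sphere 0 1).image (by fun_prop)

theorem exists_forall_re_exp_mul_pos_of_convex {K : Set ℂ} (hK : Convex ℝ K) (hc : IsClosed K)
    (h0 : (0 : ℂ) ∉ K) : ∃ θ : ℝ, ∀ z ∈ K, 0 < (exp (θ * I) * z).re := by
  rcases K.eq_empty_or_nonempty with rfl | hne
  · exact ⟨0, by simp⟩
  -- the point `v` of `K` nearest to `0` gives the separating direction
  obtain ⟨v, hv, hmin⟩ := exists_norm_eq_iInf_of_complete_convex hne hc.isComplete hK 0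
  have hv0 : v ≠ 0 := ne_of_mem_of_not_mem hv h0
  have hsep := (norm_eq_iInf_iff_real_inner_le_zero hK hv).mp hmin
  refine ⟨(conj v).arg, fun z hz => ?_⟩
  have h := hsep z hz
  rw [Complex.inner] at h
  have hpolar : (conj v * z).re = ‖v‖ * (exp ((conj v).arg * I) * z).re := by
    conv_lhs => rw [← norm_mul_exp_arg_mul_I (conj v)]
    rw [norm_conj, mul_assoc, re_ofReal_mul]
  have hvv : 0 < (conj v * v).re := by
    rw [conj_mul']; norm_cast; positivity
  have : 0 < (conj v * z).re := by
    simp only [mul_re, sub_re, sub_im, zero_re, zero_im,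
      conj_re, conj_im] at h hvv ⊢
    linarith
  rw [hpolar] at this
  exact pos_of_mul_pos_right this (norm_nonneg v)

end NumericalRange

section Congruence

open Complex
open scoped MatrixOrder ComplexStarModule

variable {ι : Type*} [Fintype ι]

lemma star_dotProduct_conjTranspose_mulVec (B : Matrix ι ι ℂ) (x : ι → ℂ) :
    star x ⬝ᵥ Bᴴ *ᵥ x = star (star x ⬝ᵥ B *ᵥ x) := by
  rw [dotProduct_mulVec, ← star_mulVec, star_dotProduct]

lemma star_dotProduct_realPart_mulVec (B : Matrix ι ι ℂ) (x : ι → ℂ) :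
    star x ⬝ᵥ (ℜ B : Matrix ι ι ℂ) *ᵥ x = ((star x ⬝ᵥ B *ᵥ x).re : ℂ) := by
  rw [realPart_apply_coe, smul_mulVec, add_mulVec, dotProduct_smul, dotProduct_add,
    star_eq_conjTranspose, star_dotProduct_conjTranspose_mulVec, star_def,
    add_conj, real_smul]
  push_cast
  ring

lemma posDef_realPart_of_forall_re_pos (B : Matrix ι ι ℂ)
    (hB : ∀ x ≠ 0, 0 < (star x ⬝ᵥ B *ᵥ x).re) : (ℜ B : Matrix ι ι ℂ).PosDef :=
  .of_dotProduct_mulVec_pos (ℜ B).prop fun x hx => by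
    rw [star_dotProduct_realPart_mulVec]
    exact_mod_cast hB x hx

lemma exists_add_I_smul_eq_conjTranspose_mul_diagonal_mul_of_posDef [DecidableEq ι]
    {H K : Matrix ι ι ℂ} (hH : H.PosDef) (hK : K.IsHermitian) :
    ∃ (T : Matrix ι ι ℂ) (μ : ι → ℝ),
      IsUnit T ∧ H + I • K = Tᴴ * diagonal (fun i => 1 + μ i * I) * T := by
  obtain ⟨C, hC, rfl⟩ :=
    CStarAlgebra.isStrictlyPositive_iff_eq_star_mul_self.mp hH.isStrictlyPositive
  lift C to (Matrix ι ι ℂ)ˣ using hC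
  set S : Matrix ι ι ℂ := (↑C⁻¹ : Matrix ι ι ℂ)ᴴ * K * (↑C⁻¹ : Matrix ι ι ℂ)
  have hS : S.IsHermitian := isHermitian_conjTranspose_mul_mul _ hK
  have hKS : K = star (C : Matrix ι ι ℂ) * S * C := by
    simp only [S, mul_assoc, C.inv_mul, mul_one]
    rw [← mul_assoc, star_eq_conjTranspose, ← conjTranspose_mul, C.inv_mul, conjTranspose_one,
      one_mul]
  obtain ⟨U, μ, hU, hUunit, hspec⟩ : ∃ (U : Matrix ι ι ℂ) (μ : ι → ℝ), U * star U = 1 ∧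
      IsUnit (star U) ∧ S = U * diagonal (fun i => (μ i : ℂ)) * star U :=
    ⟨_, _, Unitary.mul_star_self_of_mem hS.eigenvectorUnitary.2, Unitary.isUnit_coe.star,
      hS.spectral_theorem⟩
  have hdiag : diagonal (fun i => 1 + μ i * I) = 1 + I • diagonal (fun i => (μ i : ℂ)) := by
    rw [← diagonal_one, ← diagonal_smul, diagonal_add]
    congr 1
    ext i
    simp [mul_comm]
  refine ⟨star U * C, μ, hUunit.mul C.isUnit, ?_⟩
  rw [hdiag, hKS, hspec, ← star_eq_conjTranspose, star_mul, star_star]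
  simp only [mul_add, add_mul, mul_one, Matrix.mul_smul, Matrix.smul_mul, ← mul_assoc]
  rw [mul_assoc (star (C : Matrix ι ι ℂ)) U (star U), hU, mul_one]

end Congruence

section Phases

open Complex
open scoped ComplexStarModule

lemma diagonal_eq_conjTranspose_mul_phaseDiag_mul (d : Fin n → ℂ) :
    diagonal d = (diagonal fun i => ((√‖d i‖ : ℝ) : ℂ))ᴴ * phaseDiag (fun i => (d i).arg)
      * diagonal fun i => ((√‖d i‖ : ℝ) : ℂ) := by
  rw [phaseDiag, diagonal_conjTranspose, diagonal_mul_diagonal, diagonal_mul_diagonal]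
  congr 1
  ext i
  conv_lhs => rw [← norm_mul_exp_arg_mul_I (d i)]
  simp only [Pi.star_apply, star_def, conj_ofReal]
  rw [mul_comm I, mul_right_comm, ← ofReal_mul, Real.mul_self_sqrt (norm_nonneg _)]

lemma exists_sectorialDecomp_of_forall_re_pos (B : Matrix (Fin n) (Fin n) ℂ)
    (hB : ∀ x ≠ 0, 0 < (star x ⬝ᵥ B *ᵥ x).re) :
    ∃ T ψ, IsSectorialDecomp B T ψ ∧ ∀ i, |ψ i| < Real.pi / 2 := by
  obtain ⟨T, μ, hT, hBT⟩ := exists_add_I_smul_eq_conjTranspose_mul_diagonal_mul_of_posDef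
    (posDef_realPart_of_forall_re_pos B hB) (ℑ B).prop
  rw [realPart_add_I_smul_imaginaryPart] at hBT
  set G := diagonal fun i => ((√‖1 + μ i * I‖ : ℝ) : ℂ)
  have hd : ∀ i, 0 < (1 + μ i * I).re := fun i => by simp
  have hG : IsUnit G := by
    rw [isUnit_diagonal, Pi.isUnit_iff]
    intro i
    have : (1 + μ i * I) ≠ 0 := fun h => by simpa [h] using hd i
    simpa [norm_pos_iff] using this
  refine ⟨G * T, fun i => (1 + μ i * I).arg, ⟨hG.mul hT, ?_⟩,
    fun i => abs_arg_lt_pi_div_two_iff.mpr (.inl (hd i))⟩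
  rw [hBT, diagonal_eq_conjTranspose_mul_phaseDiag_mul, conjTranspose_mul]
  simp only [G, Matrix.mul_assoc]

lemma phaseDiag_add_const (ψ : Fin n → ℝ) (c : ℝ) :
    phaseDiag (fun i => ψ i + c) = exp (c * I) • phaseDiag ψ := by
  rw [phaseDiag, phaseDiag, ← diagonal_smul]
  congr 1
  ext i
  rw [Pi.smul_apply, smul_eq_mul, ← exp_add]
  push_cast
  ring_nf

lemma IsSectorialDecomp.exp_smul {A T : Matrix (Fin n) (Fin n) ℂ} {ψ : Fin n → ℝ}
    (h : IsSectorialDecomp A T ψ) (c : ℝ) :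
    IsSectorialDecomp (exp (c * I) • A) T (fun i => ψ i + c) := by
  refine ⟨h.1, ?_⟩
  rw [h.2, phaseDiag_add_const, Matrix.mul_smul, Matrix.smul_mul]

lemma IsSectorialDecomp.submatrix {A T : Matrix (Fin n) (Fin n) ℂ} {ψ : Fin n → ℝ}
    (h : IsSectorialDecomp A T ψ) (σ : Equiv.Perm (Fin n)) :
    IsSectorialDecomp A (T.submatrix σ id) (ψ ∘ σ) := by
  refine ⟨(isUnit_submatrix_equiv σ (Equiv.refl _)).mpr h.1, ?_⟩
  have hP : phaseDiag (ψ ∘ σ) = (phaseDiag ψ).submatrix σ σ := by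
    rw [phaseDiag, phaseDiag, submatrix_diagonal_equiv]
    rfl
  rw [hP, conjTranspose_submatrix, submatrix_mul_equiv, submatrix_mul_equiv, submatrix_id_id, h.2]

lemma exists_isCanonicalPhases_of_sectorialDecomp [NeZero n] {A T : Matrix (Fin n) (Fin n) ℂ}
    {ψ : Fin n → ℝ} (h : IsSectorialDecomp A T ψ) (hψ : ∀ i j, ψ i - ψ j < Real.pi) :
    ∃ φ, IsCanonicalPhases A φ := by
  set σ := Tuple.sort (fun i => -ψ i)
  have hanti : Antitone (ψ ∘ σ) := fun i j hij =>
    neg_le_neg_iff.mp (Tuple.monotone_sort (fun i => -ψ i) hij)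
  -- shifting every phase by the same multiple `c` of `2π` moves the midpoint into `(-π, π]`
  set m := ((⨆ i, ψ (σ i)) + ⨅ i, ψ (σ i)) / 2
  set c := toIocMod Real.two_pi_pos (-Real.pi) m - m
  have hm := toIocMod_mem_Ioc Real.two_pi_pos (-Real.pi) m
  have hexp : exp (c * I) = 1 := by
    obtain ⟨k, hc⟩ : ∃ k : ℤ, c = k * (2 * Real.pi) := ⟨-toIocDiv Real.two_pi_pos (-Real.pi) m, by
      simp only [c]
      rw [← neg_sub, self_sub_toIocMod, zsmul_eq_mul]
      push_cast
      ring⟩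
    rw [hc]
    push_cast
    rw [mul_assoc]
    exact exp_int_mul_two_pi_mul_I k
  have hmid : ((⨆ i, ψ (σ i) + c) + ⨅ i, ψ (σ i) + c) / 2
      = toIocMod Real.two_pi_pos (-Real.pi) m := by
    rw [← ciSup_add (Set.finite_range _).bddAbove, ← ciInf_add (Set.finite_range _).bddBelow]
    simp only [c, m]
    ring
  refine ⟨fun i => ψ (σ i) + c, fun i j hij => by simpa using hanti hij,
    fun i j => by simpa using hψ (σ i) (σ j), hmid ▸ hm.1, hmid ▸ by linarith [hm.2],
    T.submatrix σ id, ?_⟩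
  have := (h.submatrix σ).exp_smul c
  rwa [hexp, one_smul] at this

lemma IsSectorial.exists_isCanonicalPhases [NeZero n] {A : Matrix (Fin n) (Fin n) ℂ}
    (hA : IsSectorial A) : ∃ φ, IsCanonicalPhases A φ := by
  obtain ⟨θ, hθ⟩ := exists_forall_re_exp_mul_pos_of_convex (convex_numericalRange A)
    (isCompact_numericalRange A).isClosed fun ⟨x, hx, hq⟩ => hA x hx hq
  have hB : ∀ x ≠ 0, 0 < (star x ⬝ᵥ (exp (θ * I) • A) *ᵥ x).re := by
    intro x hx
    have h := hθ _ (div_mem_numericalRange A hx)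
    rw [star_dotProduct_self_eq_ofReal, ← mul_div_assoc, div_ofReal_re] at h
    rw [smul_mulVec, dotProduct_smul, smul_eq_mul]
    exact (div_pos_iff_of_pos_right (re_star_dotProduct_self_pos hx)).mp h
  obtain ⟨T, ψ, hdec, hψ⟩ := exists_sectorialDecomp_of_forall_re_pos _ hB
  have hdecA : IsSectorialDecomp A T (fun i => ψ i + -θ) := by
    have := hdec.exp_smul (-θ)
    rwa [smul_smul, ← exp_add, ofReal_neg, ← add_mul, neg_add_cancel, zero_mul,
      exp_zero, one_smul] at this
  exact exists_isCanonicalPhases_of_sectorialDecomp hdecA fun i j => by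
    linarith [(abs_lt.mp (hψ i)).2, (abs_lt.mp (hψ j)).1]

lemma IsSectorialDecomp.exists_ne_zero_star_dotProduct_mulVec_eq
    {A T : Matrix (Fin n) (Fin n) ℂ} {φ : Fin n → ℝ} (h : IsSectorialDecomp A T φ) (k : Fin n) :
    ∃ x ≠ 0, star x ⬝ᵥ A *ᵥ x = exp (I * φ k) := by
  obtain ⟨hT, rfl⟩ := h
  lift T to (Matrix (Fin n) (Fin n) ℂ)ˣ using hT
  have hx : (T : Matrix (Fin n) (Fin n) ℂ) *ᵥ (↑T⁻¹ *ᵥ Pi.single k 1) = Pi.single k 1 := by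
    rw [mulVec_mulVec, T.mul_inv, one_mulVec]
  refine ⟨↑T⁻¹ *ᵥ Pi.single k 1, fun h0 => ?_, ?_⟩
  · have := congrFun hx k
    rw [h0, mulVec_zero] at this
    simp at this
  · rw [← mulVec_mulVec, ← mulVec_mulVec, hx, dotProduct_mulVec, ← star_mulVec, hx, phaseDiag,
      diagonal_mulVec_single]
    simp

lemma isCanonicalPhases_phases {A : Matrix (Fin n) (Fin n) ℂ}
    (h : ∃ φ, IsCanonicalPhases A φ) : IsCanonicalPhases A (phases A) := by
  rw [phases, dif_pos h]
  exact h.choose_spec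

end Phases

/-- if the numerical range contains no positive real number, then
`A` has full phase-rank. -/
theorem prank_eq_n_of_no_positive_real_in_range
    (A : Matrix (Fin n) (Fin n) ℂ) (hA : IsSectorial A)
    (h : ∀ x : Fin n → ℂ, star x ⬝ᵥ x = 1 →
      ¬((star x ⬝ᵥ A.mulVec x).im = 0 ∧ 0 < (star x ⬝ᵥ A.mulVec x).re)) :
    prank A = n := by
  rcases Nat.eq_zero_or_pos n with rfl | hn
  · simp [prank, Set.eq_empty_of_isEmpty]
  have : NeZero n := ⟨hn.ne'⟩
  obtain ⟨-, -, -, -, T, hdec⟩ := isCanonicalPhases_phases hA.exists_isCanonicalPhases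
  have hne : ∀ k, phases A k ≠ 0 := by
    intro k hk
    obtain ⟨x, hx0, hx⟩ := hdec.exists_ne_zero_star_dotProduct_mulVec_eq k
    obtain ⟨y, hy, hyx⟩ := div_mem_numericalRange A hx0
    rw [hx, hk, star_dotProduct_self_eq_ofReal] at hyx
    refine h y hy ⟨?_, ?_⟩ <;> simp [hyx, re_star_dotProduct_self_pos hx0]
  simp [prank, hne]

end LowPrank
end
end

section
/- Let A ∈ ℂ^{n×n} be unitary, let T ∈ ℂ^{n×n} be invertible, and let D = diag(e^{iφ₁},…,e^{iφₙ}) be a diagonal unitary matrix with φ₁ ≥ ⋯ ≥ φₙ and φ₁ − φₙ < π, such that A = TᴴDT. Then T is unitary. -/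
noncomputable section

open Matrix
open scoped Classical ComplexOrder

namespace LowPrank

variable {n : ℕ}

/-! Put `P = T Tᴴ`, which is positive semidefinite. Unitarity of `A = Tᴴ D T` gives
`P D P = D`, so an eigenvector `v` of `P` with eigenvalue `μ ≥ 0` satisfies
`v* D v = μ² v* D v`. Since the phases of `D` spread less than `π`, rotating by the midpoint `c`
puts them all in `(-π/2, π/2)`, so `Re (e^{-ic} v* D v) > 0` and `v* D v ≠ 0`. Hence every
eigenvalue of `P` is `1` and `P = 1` by the spectral theorem. -/

section

variable {𝕜 ι : Type*} [RCLike 𝕜] [Fintype ι]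

lemma _root_.Matrix.IsHermitian.star_dotProduct_mul_mul_mulVec_of_mulVec_eq_smul
    {P : Matrix ι ι 𝕜} (hP : P.IsHermitian) (M : Matrix ι ι 𝕜) {v : ι → 𝕜} {μ : ℝ}
    (hv : P *ᵥ v = μ • v) :
    star v ⬝ᵥ (P * M * P) *ᵥ v = (μ : 𝕜) ^ 2 * (star v ⬝ᵥ M *ᵥ v) := by
  have hv' : star v ᵥ* P = μ • star v := by
    rw [← hP.eq, ← star_mulVec, hv, star_smul, star_trivial]
  rw [← mulVec_mulVec, ← mulVec_mulVec, hv, dotProduct_mulVec, hv', mulVec_smul,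
    smul_dotProduct, dotProduct_smul, smul_smul, ← pow_two,
    RCLike.real_smul_eq_coe_mul, RCLike.ofReal_pow]

variable [DecidableEq ι]

lemma _root_.Matrix.PosSemidef.eq_one_of_mul_mul_eq {P M : Matrix ι ι 𝕜} (hP : P.PosSemidef)
    (hM : ∀ v, v ≠ 0 → star v ⬝ᵥ M *ᵥ v ≠ 0) (h : P * M * P = M) : P = 1 := by
  have heig : ∀ i, hP.isHermitian.eigenvalues i = 1 := fun i => by
    set v := ⇑(hP.isHermitian.eigenvectorBasis i)
    have hv : v ≠ 0 := fun h0 =>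
      hP.isHermitian.eigenvectorBasis.orthonormal.ne_zero i (by ext k; exact congrFun h0 k)
    have hsq := hP.isHermitian.star_dotProduct_mul_mul_mulVec_of_mulVec_eq_smul M
      (hP.isHermitian.mulVec_eigenvectorBasis i)
    rw [h] at hsq
    have hμ : ((hP.isHermitian.eigenvalues i : ℝ) : 𝕜) ^ 2 = 1 :=
      (mul_eq_right₀ (hM v hv)).mp hsq.symm
    exact (pow_eq_one_iff_of_nonneg (hP.eigenvalues_nonneg i) two_ne_zero).mp
      (by exact_mod_cast hμ)
  rw [hP.isHermitian.spectral_theorem, funext heig]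
  simp [Function.comp_def]

end

lemma _root_.Matrix.mul_conjTranspose_mul_mul_eq_of_mem_unitaryGroup {ι R : Type*} [Fintype ι]
    [DecidableEq ι] [CommRing R] [StarRing R] {T D : Matrix ι ι R} (hD : D ∈ unitaryGroup ι R)
    (hA : Tᴴ * D * T ∈ unitaryGroup ι R) : T * Tᴴ * D * (T * Tᴴ) = D := by
  have hleft : Tᴴ * (star D * (T * Tᴴ) * D * T) = 1 := by
    simpa only [star_eq_conjTranspose, conjTranspose_mul, conjTranspose_conjTranspose, mul_assoc]
      using mem_unitaryGroup_iff'.mp hA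
  have hright : star D * (T * Tᴴ) * D * (T * Tᴴ) = 1 := by
    simpa only [mul_assoc] using mul_eq_one_comm.mp hleft
  calc T * Tᴴ * D * (T * Tᴴ) = D * star D * (T * Tᴴ * D * (T * Tᴴ)) := by
        rw [mem_unitaryGroup_iff.mp hD, one_mul]
    _ = D := by rw [mul_assoc, ← mul_assoc (star D), ← mul_assoc (star D), hright, mul_one]

lemma exists_abs_sub_lt_pi_div_two {ι : Type*} [Finite ι] {ψ : ι → ℝ}
    (hψ : ∀ i j, ψ i - ψ j < Real.pi) : ∃ c, ∀ k, |ψ k - c| < Real.pi / 2 := by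
  cases isEmpty_or_nonempty ι
  · exact ⟨0, isEmptyElim⟩
  obtain ⟨i, hi⟩ := Finite.exists_max ψ
  obtain ⟨j, hj⟩ := Finite.exists_min ψ
  refine ⟨(ψ i + ψ j) / 2, fun k => abs_sub_lt_iff.mpr ⟨?_, ?_⟩⟩ <;>
    linarith [hi k, hj k, hψ i j]

lemma phaseDiag_mem_unitaryGroup (ψ : Fin n → ℝ) : phaseDiag ψ ∈ unitaryGroup (Fin n) ℂ := by
  rw [mem_unitaryGroup_iff, star_eq_conjTranspose, phaseDiag, diagonal_conjTranspose,
    diagonal_mul_diagonal, ← diagonal_one]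
  congr 1
  funext k
  rw [Pi.star_apply, RCLike.star_def, Complex.mul_conj, Complex.normSq_eq_norm_sq, mul_comm,
    Complex.norm_exp_ofReal_mul_I]
  norm_num

lemma re_exp_mul_dotProduct_phaseDiag (ψ : Fin n → ℝ) (c : ℝ) (v : Fin n → ℂ) :
    (Complex.exp (-c * Complex.I) * (star v ⬝ᵥ phaseDiag ψ *ᵥ v)).re
      = ∑ k, Complex.normSq (v k) * Real.cos (ψ k - c) := by
  simp only [dotProduct, phaseDiag, mulVec_diagonal, Pi.star_apply, RCLike.star_def,
    Finset.mul_sum, Complex.re_sum]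
  refine Finset.sum_congr rfl fun k _ => ?_
  calc (Complex.exp (-c * Complex.I) *
        ((starRingEnd ℂ) (v k) * (Complex.exp (Complex.I * ψ k) * v k))).re
      = ((Complex.normSq (v k) : ℂ) * Complex.exp ((ψ k - c : ℝ) * Complex.I)).re := by
        have hexp : Complex.exp ((ψ k - c : ℝ) * Complex.I)
            = Complex.exp (-c * Complex.I) * Complex.exp (Complex.I * ψ k) := by
          rw [← Complex.exp_add]
          push_cast
          ring_nf
        rw [hexp, ← Complex.mul_conj]
        ring_nf
    _ = Complex.normSq (v k) * Real.cos (ψ k - c) := by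
        rw [Complex.re_ofReal_mul, Complex.exp_ofReal_mul_I_re]

lemma dotProduct_phaseDiag_ne_zero {ψ : Fin n → ℝ} (hψ : ∀ i j, ψ i - ψ j < Real.pi)
    {v : Fin n → ℂ} (hv : v ≠ 0) : star v ⬝ᵥ phaseDiag ψ *ᵥ v ≠ 0 := by
  obtain ⟨c, hc⟩ := exists_abs_sub_lt_pi_div_two hψ
  have hcos : ∀ k, 0 < Real.cos (ψ k - c) := fun k =>
    Real.cos_pos_of_mem_Ioo ⟨by linarith [neg_abs_le (ψ k - c), hc k],
      by linarith [le_abs_self (ψ k - c), hc k]⟩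
  obtain ⟨k₀, hk₀⟩ := Function.ne_iff.mp hv
  have hpos : 0 < ∑ k, Complex.normSq (v k) * Real.cos (ψ k - c) :=
    Finset.sum_pos' (fun k _ => mul_nonneg (Complex.normSq_nonneg _) (hcos k).le)
      ⟨k₀, Finset.mem_univ _, mul_pos (Complex.normSq_pos.mpr hk₀) (hcos k₀)⟩
  intro h
  rw [← re_exp_mul_dotProduct_phaseDiag ψ c, h, mul_zero, Complex.zero_re] at hpos
  exact lt_irrefl 0 hpos

theorem unitary_sectorial_decomp_factor_unitary_general
    (A T : Matrix (Fin n) (Fin n) ℂ) (φ : Fin n → ℝ)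
    (hA : A ∈ Matrix.unitaryGroup (Fin n) ℂ)
    (hspread : ∀ i j, φ i - φ j < Real.pi)
    (hdec : A = Tᴴ * phaseDiag φ * T) :
    T ∈ Matrix.unitaryGroup (Fin n) ℂ := by
  have hfixed : T * Tᴴ * phaseDiag φ * (T * Tᴴ) = phaseDiag φ :=
    mul_conjTranspose_mul_mul_eq_of_mem_unitaryGroup (phaseDiag_mem_unitaryGroup φ) (hdec ▸ hA)
  have hone : T * Tᴴ = 1 := (posSemidef_self_mul_conjTranspose T).eq_one_of_mul_mul_eq
    (fun _ hv => dotProduct_phaseDiag_ne_zero hspread hv) hfixed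
  rwa [mem_unitaryGroup_iff, star_eq_conjTranspose]

/-- in a sectorial decomposition of a unitary matrix, `T` is unitary. -/
theorem unitary_sectorial_decomp_factor_unitary
    (A T : Matrix (Fin n) (Fin n) ℂ) (φ : Fin n → ℝ)
    (hA : A ∈ Matrix.unitaryGroup (Fin n) ℂ)
    (hT : IsUnit T) (hφsort : Antitone φ)
    (hspread : ∀ i j, φ i - φ j < Real.pi)
    (hdec : A = Tᴴ * phaseDiag φ * T) :
    T ∈ Matrix.unitaryGroup (Fin n) ℂ :=
  unitary_sectorial_decomp_factor_unitary_general A T φ hA hspread hdec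

end LowPrank
end
end
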